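/- arXiv:1709.02977 — 5 statements merged into one kernel-verified Lean document; each statement's English description precedes it below -/
import Mathlib

section
/- Let c > 0 and Δ > 0 be real numbers. The equation y·(y−Δ)·log(y/(y−Δ)) = cΔ/3 has exactly one solution y in the interval (Δ, Δ + c/3]. (This solution is the optimal maximum-likelihood decision threshold θ for binary timing modulation over the diffusion-based molecular timing channel with a single released particle.) -/
/-!
The left-hand side `F y = y (y - Δ) log (y / (y - Δ))` is strictly increasing on `[Δ, ∞)`:
its derivative `(2y - Δ) log (y / (y - Δ)) - Δ` is positive by `log (y / (y - Δ)) > Δ / y`.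
Moreover `F Δ = 0` (with `F` continuous at `Δ` because `t log t → 0`), and the same log bound
gives `F (Δ + c/3) > cΔ/3`. The intermediate value theorem on `[Δ, Δ + c/3]` and strict
monotonicity then give exactly one solution.
-/

open Real Set

lemma div_lt_log_div_sub {d y : ℝ} (hd : 0 < d) (hy : d < y) : d / y < log (y / (y - d)) := by
  have hy0 : 0 < y := hd.trans hy
  have hlt : log ((y - d) / y) < (y - d) / y - 1 :=
    log_lt_sub_one_of_pos (div_pos (sub_pos.2 hy) hy0) fun h => by
      rw [div_eq_one_iff_eq hy0.ne'] at h; linarith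
  rw [← inv_div (y - d) y, log_inv]
  have : (y - d) / y - 1 = -(d / y) := by field_simp; ring
  linarith

/-- At `y = d` the junk value `log (d / 0) = 0` makes this `0`, its limit from the right. -/
noncomputable def thresholdFun (d y : ℝ) : ℝ := y * (y - d) * log (y / (y - d))

lemma thresholdFun_self (d : ℝ) : thresholdFun d d = 0 := by simp [thresholdFun]

lemma thresholdFun_eq_mul_log_sub_mul_log {d y : ℝ} (hd : 0 < d) (hy : d ≤ y) :
    thresholdFun d y = y * ((y - d) * log y - (y - d) * log (y - d)) := by
  rcases hy.eq_or_lt with rfl | hy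
  · simp [thresholdFun]
  · rw [thresholdFun, log_div (hd.trans hy).ne' (sub_pos.2 hy).ne']
    ring

lemma continuousOn_thresholdFun {d : ℝ} (hd : 0 < d) : ContinuousOn (thresholdFun d) (Ici d) := by
  refine ContinuousOn.congr (f := fun y => y * ((y - d) * log y - (y - d) * log (y - d)))
    ?_ fun y hy => thresholdFun_eq_mul_log_sub_mul_log hd hy
  have hlog : ContinuousOn log (Ici d) :=
    continuousOn_log.mono fun y hy => (hd.trans_le hy).ne'
  exact continuousOn_id.mul (((continuousOn_id.sub continuousOn_const).mul hlog).sub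
    (continuous_mul_log.comp (continuous_id.sub continuous_const)).continuousOn)

lemma hasDerivAt_thresholdFun {d y : ℝ} (hd : 0 < d) (hy : d < y) :
    HasDerivAt (thresholdFun d) ((2 * y - d) * log (y / (y - d)) - d) y := by
  have hy0 : y ≠ 0 := (hd.trans hy).ne'
  have hyd : y - d ≠ 0 := (sub_pos.2 hy).ne'
  have hquot := (hasDerivAt_id' y).div ((hasDerivAt_id' y).sub_const d) hyd
  refine (((hasDerivAt_id' y).mul ((hasDerivAt_id' y).sub_const d)).mul
    (hquot.log (div_ne_zero hy0 hyd))).congr_deriv ?_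
  simp only [Pi.div_apply, Pi.mul_apply]
  field_simp
  ring

lemma strictMonoOn_thresholdFun {d : ℝ} (hd : 0 < d) : StrictMonoOn (thresholdFun d) (Ici d) := by
  refine strictMonoOn_of_deriv_pos (convex_Ici d) (continuousOn_thresholdFun hd) fun y hy => ?_
  rw [interior_Ici, mem_Ioi] at hy
  have hy0 : 0 < y := hd.trans hy
  rw [(hasDerivAt_thresholdFun hd hy).deriv, sub_pos]
  calc d < (2 * y - d) * (d / y) := by
        rw [← mul_div_assoc, lt_div_iff₀ hy0]; nlinarith
    _ < (2 * y - d) * log (y / (y - d)) :=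
        mul_lt_mul_of_pos_left (div_lt_log_div_sub hd hy) (by linarith)

lemma mul_sub_lt_thresholdFun {d y : ℝ} (hd : 0 < d) (hy : d < y) :
    d * (y - d) < thresholdFun d y := by
  have hy0 : 0 < y := hd.trans hy
  calc d * (y - d) = y * (y - d) * (d / y) := by field_simp
    _ < y * (y - d) * log (y / (y - d)) :=
        mul_lt_mul_of_pos_left (div_lt_log_div_sub hd hy) (mul_pos hy0 (sub_pos.2 hy))

/-- The maximum-likelihood threshold equation for the single-particle DBMT channel
has exactly one solution in the interval `(Δ, Δ + c/3]`. -/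
theorem unique_ML_threshold (c Δ : ℝ) (hc : 0 < c) (hΔ : 0 < Δ) :
    ∃! y : ℝ, y ∈ Set.Ioc Δ (Δ + c / 3) ∧
      y * (y - Δ) * Real.log (y / (y - Δ)) = c * Δ / 3 := by
  have hb : Δ < Δ + c / 3 := by linarith
  have hvalue : c * Δ / 3 ∈ Ioc (thresholdFun Δ Δ) (thresholdFun Δ (Δ + c / 3)) := by
    rw [thresholdFun_self]
    refine ⟨by positivity, le_of_lt ?_⟩
    simpa [mul_comm c Δ, mul_div_assoc] using mul_sub_lt_thresholdFun hΔ hb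
  obtain ⟨y, hy, hFy⟩ := intermediate_value_Ioc hb.le
    ((continuousOn_thresholdFun hΔ).mono Icc_subset_Ici_self) hvalue
  refine ⟨y, ⟨hy, hFy⟩, fun z ⟨hz, hFz⟩ => ?_⟩
  exact (strictMonoOn_thresholdFun hΔ).injOn (mem_Ici.2 hz.1.le) (mem_Ici.2 hy.1.le)
    (hFz.trans hFy.symm)
end

section
/- Let c > 0. For every z > 0, the integral of the Lévy density over (0, z] equals erfc evaluated at √(c/(2z)); that is, ∫_{(0,z]} √(c/(2π u³))·exp(−c/(2u)) du = (2/√π)·∫_{√(c/(2z))}^∞ exp(−u²) du. (Hence the CDF of the Lévy distribution with location 0 and scale c is F(z) = erfc(√(c/(2z))) for z > 0.) -/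
/-!
Substituting `u = c / (2 t²)` maps `t ∈ (√(c/(2z)), ∞)` bijectively and decreasingly onto
`u ∈ (0, z)`, with `|du/dt| = c / t³`. Under this substitution the Lévy density becomes
`√(c/(2π u³)) = 2 t³ / (c √π)` times `exp (-c/(2u)) = exp (-t²)`, so the integrand turns into
`(2/√π) exp (-t²)`, which is the integrand of `erfc`.
-/

open MeasureTheory

/-- The Lévy density with location 0 and scale `c`. -/
noncomputable def levyDensity (c z : ℝ) : ℝ :=
  if 0 < z then Real.sqrt (c / (2 * Real.pi * z ^ 3)) * Real.exp (-c / (2 * z)) else 0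

/-- The complementary error function `erfc x = (2/√π) ∫_x^∞ exp(−u²) du`. -/
noncomputable def erfc (x : ℝ) : ℝ :=
  (2 / Real.sqrt Real.pi) * ∫ u in Set.Ioi x, Real.exp (-u ^ 2)

open Set

section LevySubstitution

variable {c : ℝ}

theorem hasDerivAt_div_two_mul_sq {t : ℝ} (ht : t ≠ 0) :
    HasDerivAt (fun t : ℝ => c / (2 * t ^ 2)) (-(c / t ^ 3)) t := by
  refine ((hasDerivAt_const t c).fun_div ((hasDerivAt_pow 2 t).const_mul 2)
    (by positivity)).congr_deriv ?_
  field_simp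
  ring

theorem strictAntiOn_div_two_mul_sq (hc : 0 < c) :
    StrictAntiOn (fun t : ℝ => c / (2 * t ^ 2)) (Ioi 0) := by
  intro s (hs : 0 < s) t _ hst
  dsimp only
  gcongr

theorem image_div_two_mul_sq_Ioi_sqrt (hc : 0 < c) {z : ℝ} (hz : 0 < z) :
    (fun t : ℝ => c / (2 * t ^ 2)) '' Ioi √(c / (2 * z)) = Ioo 0 z := by
  have hcz : 0 < c / (2 * z) := by positivity
  ext u
  constructor
  · rintro ⟨t, ht, rfl⟩
    have ht0 : 0 < t := (Real.sqrt_pos.mpr hcz).trans ht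
    have hzt : c / (2 * z) < t ^ 2 := (Real.sqrt_lt' ht0).mp ht
    refine ⟨by positivity, ?_⟩
    rw [div_lt_iff₀ (by positivity)] at hzt ⊢
    linarith
  · rintro ⟨hu0, huz⟩
    refine ⟨√(c / (2 * u)), Real.sqrt_lt_sqrt hcz.le (by gcongr), ?_⟩
    dsimp only
    rw [Real.sq_sqrt (by positivity)]
    field_simp

theorem integral_Ioo_eq_integral_Ioi_sqrt {E : Type*} [NormedAddCommGroup E] [NormedSpace ℝ E]
    (hc : 0 < c) {z : ℝ} (hz : 0 < z) (g : ℝ → E) :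
    ∫ u in Ioo 0 z, g u = ∫ t in Ioi √(c / (2 * z)), (c / t ^ 3) • g (c / (2 * t ^ 2)) := by
  have hpos : Ioi √(c / (2 * z)) ⊆ Ioi 0 := Ioi_subset_Ioi (Real.sqrt_nonneg _)
  rw [← image_div_two_mul_sq_Ioi_sqrt hc hz,
    integral_image_eq_integral_abs_deriv_smul measurableSet_Ioi
      (fun t ht => (hasDerivAt_div_two_mul_sq (hpos ht).ne').hasDerivWithinAt)
      ((strictAntiOn_div_two_mul_sq hc).injOn.mono hpos)]
  refine setIntegral_congr_fun measurableSet_Ioi fun t ht => ?_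
  have ht0 : 0 < t := hpos ht
  rw [abs_neg, abs_of_pos (by positivity)]

theorem div_pow_three_mul_levyDensity (hc : 0 < c) {t : ℝ} (ht : 0 < t) :
    c / t ^ 3 * levyDensity c (c / (2 * t ^ 2)) = 2 / √Real.pi * Real.exp (-t ^ 2) := by
  have hsqrt : √(c / (2 * Real.pi * (c / (2 * t ^ 2)) ^ 3)) = 2 * t ^ 3 / (√Real.pi * c) := by
    rw [Real.sqrt_eq_iff_eq_sq (by positivity) (by positivity)]
    field_simp
    rw [Real.sq_sqrt Real.pi_pos.le]
  have hexp : -c / (2 * (c / (2 * t ^ 2))) = -t ^ 2 := by field_simp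
  rw [levyDensity, if_pos (by positivity), hsqrt, hexp]
  field_simp

end LevySubstitution

/-- The CDF of the Lévy distribution with location 0 and scale `c` is
`F(z) = erfc (√(c/(2z)))` for `z > 0`. -/
theorem levy_cdf (c : ℝ) (hc : 0 < c) (z : ℝ) (hz : 0 < z) :
    ∫ u in Set.Ioc (0 : ℝ) z, levyDensity c u = erfc (Real.sqrt (c / (2 * z))) := by
  rw [integral_Ioc_eq_integral_Ioo, integral_Ioo_eq_integral_Ioi_sqrt hc hz, erfc,
    ← integral_const_mul]
  refine setIntegral_congr_fun measurableSet_Ioi fun t ht => ?_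
  exact div_pow_three_mul_levyDensity hc ((Real.sqrt_nonneg _).trans_lt ht)
end

section
/- Let c > 0, Δ > 0, M ≥ 1, and θ > Δ. Consider a probability space carrying a random bit S uniform on {0, 1} and random variables Z_1, …, Z_M such that S, Z_1, …, Z_M are mutually independent and each Z_m has law ν_c (the Lévy distribution with scale c). Set X = Δ·S and Y_m = X + Z_m, and define the first-arrival detector Ŝ_FA = 1 if min_{m} Y_m ≥ θ and Ŝ_FA = 0 otherwise. Then the error probability satisfies P(Ŝ_FA ≠ S) = (1/2)·[ (1 − erfc(√(c/(2θ))))^M + 1 − (1 − erfc(√(c/(2(θ − Δ)))))^M ]. -/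
open MeasureTheory ProbabilityTheory

/-- The Lévy distribution with location 0 and scale `c`, as a measure on `ℝ`. -/
noncomputable def levyMeasure (c : ℝ) : Measure ℝ :=
  volume.withDensity fun z => ENNReal.ofReal (levyDensity c z)

/-!
The Lévy tail is explicit: `z ↦ erfc √(c / (2z))` is an antiderivative of the Lévy density
(chain rule through `erfc' = -(2/√π) e^{-x²}`) and tends to `erfc 0 = 1` at infinity, so
`ν_c [t, ∞) = 1 - erfc √(c / (2t))`. Given `S`, the first-arrival detector errs for `S = 0`
exactly when every `Z_m ≥ θ`, and for `S = 1` exactly when some `Z_m < θ - Δ`; independence of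
`S, Z_1, …, Z_M` turns both events into products of `M` equal Lévy tails.
-/

open Real Set Filter Topology

theorem hasDerivAt_integral_Ioi {f : ℝ → ℝ} (hf : Integrable f) (hcont : Continuous f) (a : ℝ) :
    HasDerivAt (fun y => ∫ x in Ioi y, f x) (-f a) a := by
  have hsplit :
      (fun y => ∫ x in Ioi y, f x) = fun y => (∫ x in y..0, f x) + ∫ x in Ioi 0, f x :=
    funext fun y =>
      (intervalIntegral.integral_interval_add_Ioi hf.integrableOn hf.integrableOn).symm
  rw [hsplit]
  exact (intervalIntegral.integral_hasDerivAt_left hf.intervalIntegrable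
    (hcont.stronglyMeasurableAtFilter _ _) hcont.continuousAt).add_const _

theorem hasDerivAt_erfc (x : ℝ) :
    HasDerivAt erfc (2 / √π * -Real.exp (-x ^ 2)) x :=
  (hasDerivAt_integral_Ioi (by simpa using integrable_exp_neg_mul_sq one_pos)
    (by fun_prop) x).const_mul _

theorem erfc_zero : erfc 0 = 1 := by
  have h := integral_gaussian_Ioi 1
  simp only [neg_mul, one_mul, div_one] at h
  have : √π ≠ 0 := by positivity
  rw [erfc, h]
  field_simp

theorem levyDensity_nonneg (c z : ℝ) : 0 ≤ levyDensity c z := by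
  unfold levyDensity
  split_ifs <;> positivity

theorem hasDerivAt_erfc_sqrt_div {c z : ℝ} (hc : 0 < c) (hz : 0 < z) :
    HasDerivAt (fun y => erfc √(c / (2 * y))) (levyDensity c z) z := by
  have hpos : 0 < c / (2 * z) := by positivity
  set s := √(c / (2 * z))
  have hs : 0 < s := Real.sqrt_pos.mpr hpos
  have hs2 : s ^ 2 = c / (2 * z) := Real.sq_sqrt hpos.le
  have hinner : HasDerivAt (fun y => c / (2 * y)) (-(c / (2 * z ^ 2))) z :=
    ((hasDerivAt_const z c).div ((hasDerivAt_id z).const_mul 2) (by simp [hz.ne'])).congr_deriv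
      (by simp only [id]; field_simp; ring)
  have hdensity : √(c / (2 * π * z ^ 3)) = c / (2 * √π * s * z ^ 2) := by
    rw [Real.sqrt_eq_iff_mul_self_eq_of_pos (by positivity)]
    field_simp
    rw [Real.sq_sqrt pi_pos.le, hs2]
    field_simp
  refine ((hasDerivAt_erfc s).comp z
    ((Real.hasDerivAt_sqrt hpos.ne').comp z hinner)).congr_deriv ?_
  rw [levyDensity, if_pos hz, hdensity, neg_div, ← hs2, Real.sqrt_sq hs.le]
  field_simp

theorem tendsto_erfc_sqrt_div_atTop (c : ℝ) :
    Tendsto (fun z => erfc √(c / (2 * z))) atTop (𝓝 1) := by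
  have hsqrt : Tendsto (fun z : ℝ => √(c / (2 * z))) atTop (𝓝 0) := by
    simpa [Function.comp_def] using (Real.continuous_sqrt.tendsto 0).comp
      (tendsto_const_nhds.div_atTop (tendsto_id.const_mul_atTop two_pos))
  simpa [erfc_zero, Function.comp_def] using (hasDerivAt_erfc 0).continuousAt.tendsto.comp hsqrt

theorem integrableOn_Ioi_levyDensity {c t : ℝ} (hc : 0 < c) (ht : 0 < t) :
    IntegrableOn (levyDensity c) (Ioi t) :=
  integrableOn_Ioi_deriv_of_nonneg
    (hasDerivAt_erfc_sqrt_div hc ht).continuousAt.continuousWithinAt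
    (fun _ hz => hasDerivAt_erfc_sqrt_div hc (ht.trans hz)) (fun z _ => levyDensity_nonneg c z)
    (tendsto_erfc_sqrt_div_atTop c)

theorem integral_Ioi_levyDensity {c t : ℝ} (hc : 0 < c) (ht : 0 < t) :
    ∫ z in Ioi t, levyDensity c z = 1 - erfc √(c / (2 * t)) :=
  integral_Ioi_of_hasDerivAt_of_nonneg
    (hasDerivAt_erfc_sqrt_div hc ht).continuousAt.continuousWithinAt
    (fun _ hz => hasDerivAt_erfc_sqrt_div hc (ht.trans hz)) (fun z _ => levyDensity_nonneg c z)
    (tendsto_erfc_sqrt_div_atTop c)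

theorem levyMeasure_real_Ici {c t : ℝ} (hc : 0 < c) (ht : 0 < t) :
    (levyMeasure c).real (Ici t) = 1 - erfc √(c / (2 * t)) := by
  rw [levyMeasure, ← measureReal_congr Ioi_ae_eq_Ici, measureReal_def,
    withDensity_apply _ measurableSet_Ioi,
    ← ofReal_integral_eq_lintegral_ofReal (integrableOn_Ioi_levyDensity hc ht)
      (ae_of_all _ (levyDensity_nonneg c)),
    ENNReal.toReal_ofReal (setIntegral_nonneg measurableSet_Ioi fun z _ => levyDensity_nonneg c z),
    integral_Ioi_levyDensity hc ht]

theorem ProbabilityTheory.iIndepFun.measureReal_preimage_inter_iInter_preimage_of_cons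
    {Ω β : Type*} [MeasurableSpace Ω] [MeasurableSpace β] {μ : Measure Ω} {M : ℕ} {S : Ω → β}
    {Z : Fin M → Ω → β} (h : iIndepFun (Fin.cons S Z : Fin (M + 1) → Ω → β) μ)
    {B : Set β} {C : Fin M → Set β} (hB : MeasurableSet B) (hC : ∀ m, MeasurableSet (C m)) :
    μ.real (S ⁻¹' B ∩ ⋂ m, Z m ⁻¹' C m) = μ.real (S ⁻¹' B) * ∏ m, μ.real (Z m ⁻¹' C m) := by
  have hprod := h.measure_inter_preimage_eq_mul Finset.univ
    (sets := (Fin.cons B C : Fin (M + 1) → Set β)) (fun i _ => Fin.cases hB hC i)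
  have hset : ⋂ i ∈ Finset.univ,
      (Fin.cons S Z : Fin (M + 1) → Ω → β) i ⁻¹' (Fin.cons B C : Fin (M + 1) → Set β) i
      = S ⁻¹' B ∩ ⋂ m, Z m ⁻¹' C m := by
    ext ω
    simp [Fin.forall_fin_succ]
  rw [hset, Fin.prod_univ_succ] at hprod
  simp only [measureReal_def, hprod, Fin.cons_zero, Fin.cons_succ, ENNReal.toReal_mul,
    ENNReal.toReal_prod]

theorem firstArrival_errorEvent_eq {Ω ι : Type*} [Finite ι] [Nonempty ι] {S : Ω → ℝ}
    (hS01 : ∀ ω, S ω = 0 ∨ S ω = 1) (Z : ι → Ω → ℝ) (Δ θ : ℝ) :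
    {ω | (if θ ≤ ⨅ m, (Δ * S ω + Z m ω) then (1 : ℝ) else 0) ≠ S ω}
      = (S ⁻¹' {0} ∩ ⋂ m, Z m ⁻¹' Ici θ) ∪ (S ⁻¹' {1} \ ⋂ m, Z m ⁻¹' Ici (θ - Δ)) := by
  ext ω
  have hmin : θ ≤ ⨅ m, (Δ * S ω + Z m ω) ↔ ∀ m, θ ≤ Z m ω + Δ * S ω := by
    simp only [le_ciInf_iff (Set.finite_range _).bddBelow, add_comm]
  simp only [mem_ofPred_eq, mem_union, mem_inter_iff, Set.mem_sdiff, mem_preimage,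
    mem_singleton_iff, mem_iInter, mem_Ici]
  split_ifs with hθ <;> rw [hmin] at hθ <;> rcases hS01 ω with h | h <;>
    simp only [h, mul_zero, mul_one, add_zero] at hθ ⊢ <;> simp [hθ]

/-- Error probability of the first-arrival detector with threshold `θ > Δ` for the
`M`-particle binary DBMT channel with equiprobable symbols `0` and `Δ`. -/
theorem FA_detector_error_probability (c Δ θ : ℝ) (hc : 0 < c) (hΔ : 0 < Δ) (hθ : Δ < θ)
    (M : ℕ) (hM : 1 ≤ M)
    {Ω : Type*} [MeasurableSpace Ω] (μ : Measure Ω) [IsProbabilityMeasure μ]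
    (S : Ω → ℝ) (Z : Fin M → Ω → ℝ)
    (hSmeas : Measurable S) (hZmeas : ∀ m, Measurable (Z m))
    (hS01 : ∀ ω, S ω = 0 ∨ S ω = 1) (hSunif : μ {ω | S ω = 1} = 1 / 2)
    (hindep : iIndepFun (Fin.cons S Z : Fin (M + 1) → Ω → ℝ) μ)
    (hlaw : ∀ m, μ.map (Z m) = levyMeasure c) :
    μ {ω | (if θ ≤ ⨅ m, (Δ * S ω + Z m ω) then (1 : ℝ) else 0) ≠ S ω}
      = ENNReal.ofReal ((1 / 2) *
          ((1 - erfc (Real.sqrt (c / (2 * θ)))) ^ M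
            + 1 - (1 - erfc (Real.sqrt (c / (2 * (θ - Δ))))) ^ M)) := by
  have : Nonempty (Fin M) := Fin.pos_iff_nonempty.mp hM
  set A₀ := S ⁻¹' {0}
  set A₁ := S ⁻¹' {1}
  set C := fun a : ℝ => ⋂ m, Z m ⁻¹' Ici a
  have hC : ∀ a, MeasurableSet (C a) := fun a => .iInter fun m => hZmeas m measurableSet_Ici
  have hA₁ : μ.real A₁ = 1 / 2 := by simp [A₁, measureReal_def, preimage, hSunif]
  have hA₀ : μ.real A₀ = 1 / 2 := by
    have hcompl : A₀ = A₁ᶜ := by ext ω; rcases hS01 ω with h | h <;> simp [A₀, A₁, h]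
    rw [hcompl, measureReal_compl (hSmeas (measurableSet_singleton 1)), probReal_univ, hA₁]
    norm_num
  have hall : ∀ b a, 0 < a → μ.real (S ⁻¹' {b} ∩ C a)
      = μ.real (S ⁻¹' {b}) * (1 - erfc √(c / (2 * a))) ^ M := fun b a ha => by
    rw [hindep.measureReal_preimage_inter_iInter_preimage_of_cons (measurableSet_singleton b)
      fun _ => measurableSet_Ici]
    simp_rw [← map_measureReal_apply (hZmeas _) measurableSet_Ici, hlaw,
      levyMeasure_real_Ici hc ha, Finset.prod_const, Finset.card_fin]
  have hdisj : Disjoint (A₀ ∩ C θ) (A₁ \ C (θ - Δ)) :=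
    ((Set.disjoint_singleton.2 zero_ne_one).preimage S).mono inter_subset_left sdiff_subset
  rw [firstArrival_errorEvent_eq hS01, ← ofReal_measureReal,
    measureReal_union hdisj ((hSmeas (measurableSet_singleton 1)).diff (hC _)),
    eq_sub_of_add_eq' (measureReal_inter_add_sdiff (s := A₁) (hC (θ - Δ))),
    hall 0 θ (hΔ.trans hθ), hall 1 (θ - Δ) (sub_pos.2 hθ), hA₀, hA₁]
  congr 1
  ring
end

section
/- Let c > 0 and Δ > 0 and define g(x) = log((x − Δ)/x) + cΔ/(3·x·(x − Δ)) for x > Δ. Then there is a unique x* > Δ with g(x*) = 0; moreover g(x) > 0 for all x with Δ < x < x*, and g(x) < 0 for all x > x*. -/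
/-!
Multiplying `g` by the positive factor `x (x - Δ)` gives `F(x) + cΔ/3` with
`F(x) = x (x - Δ) log ((x - Δ) / x)`. The function `F` is continuous on `[Δ, ∞)` with `F(Δ) = 0`,
has derivative `(2x - Δ) log ((x - Δ) / x) + Δ ≤ -Δ` there (by the bound
`log ((x - Δ) / x) ≤ -2Δ / (2x - Δ)` from the series of `artanh`), and satisfies
`F(x) ≤ -Δ (x - Δ)` by `log u ≤ u - 1`. So `F` decreases strictly from `0` to `-∞` and crosses the
level `-cΔ/3` exactly once.
-/

open Real Set

theorem log_sub_div_self_le {Δ x : ℝ} (hΔ : 0 ≤ Δ) (hx : Δ < x) :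
    log ((x - Δ) / x) ≤ -(2 * Δ / (2 * x - Δ)) := by
  have h2x : 0 < 2 * x - Δ := by linarith
  have hy1 : Δ / (2 * x - Δ) < 1 := (div_lt_one h2x).2 (by linarith)
  -- `y = Δ / (2x - Δ)` has `(1 + y) / (1 - y) = x / (x - Δ)`; use the first term of the series.
  have key := sum_range_le_log_div (div_nonneg hΔ h2x.le) hy1 1
  have hratio : (1 + Δ / (2 * x - Δ)) / (1 - Δ / (2 * x - Δ)) = ((x - Δ) / x)⁻¹ := by
    have hxΔ : x - Δ ≠ 0 := sub_ne_zero.2 hx.ne'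
    have h2xΔ : 2 * x - Δ - Δ ≠ 0 := (by linarith : (0 : ℝ) < 2 * x - Δ - Δ).ne'
    rw [one_add_div h2x.ne', one_sub_div h2x.ne', div_div_div_cancel_right₀ h2x.ne', inv_div,
      div_eq_div_iff h2xΔ hxΔ]
    ring
  rw [hratio, log_inv] at key
  simp only [Finset.range_one, Finset.sum_singleton] at key
  norm_num at key
  rw [mul_div_assoc]
  linarith

noncomputable def weightedLogRatio (Δ x : ℝ) : ℝ := x * (x - Δ) * log ((x - Δ) / x)

namespace weightedLogRatio

variable {Δ x : ℝ}

theorem hasDerivAt (hx : x ≠ 0) (hxΔ : x - Δ ≠ 0) :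
    HasDerivAt (weightedLogRatio Δ) ((2 * x - Δ) * log ((x - Δ) / x) + Δ) x := by
  have hquot := ((hasDerivAt_id x).sub_const Δ).div (hasDerivAt_id x) hx
  have hlog := hquot.log (div_ne_zero hxΔ hx)
  have hpoly := ((hasDerivAt_id x).mul ((hasDerivAt_id x).sub_const Δ))
  refine (hpoly.mul hlog).congr_deriv ?_
  simp only [id_eq, Pi.div_apply, Pi.mul_apply]
  field_simp
  ring

theorem deriv_le (hΔ : 0 ≤ Δ) (hx : Δ < x) : deriv (weightedLogRatio Δ) x ≤ -Δ := by
  have hx0 : 0 < x := hΔ.trans_lt hx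
  have h2x : 0 < 2 * x - Δ := by linarith
  rw [(hasDerivAt hx0.ne' (sub_ne_zero.2 hx.ne')).deriv]
  have hlog := mul_le_mul_of_nonneg_left (log_sub_div_self_le hΔ hx) h2x.le
  rw [mul_neg, mul_div_cancel₀ _ h2x.ne'] at hlog
  linarith

theorem self_eq_zero : weightedLogRatio Δ Δ = 0 := by
  simp [weightedLogRatio]

theorem continuousOn (hΔ : 0 < Δ) : ContinuousOn (weightedLogRatio Δ) (Ici Δ) := by
  have hsplit : ContinuousOn (fun x ↦ x * ((x - Δ) * log (x - Δ)) - x * (x - Δ) * log x) (Ici Δ) := by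
    refine ContinuousOn.sub ?_ ?_
    · exact (continuous_id.mul (continuous_mul_log.comp (continuous_sub_right Δ))).continuousOn
    · exact (continuous_id.mul (continuous_sub_right Δ)).continuousOn.mul
        (continuousOn_log.mono fun x hx ↦ (hΔ.trans_le hx).ne')
  refine hsplit.congr fun x hx ↦ ?_
  rcases (mem_Ici.1 hx).eq_or_lt with rfl | hlt
  · simp [self_eq_zero]
  · rw [weightedLogRatio, log_div (sub_ne_zero.2 hlt.ne') (hΔ.trans hlt).ne']
    ring

theorem strictAntiOn (hΔ : 0 < Δ) : StrictAntiOn (weightedLogRatio Δ) (Ici Δ) :=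
  strictAntiOn_of_deriv_neg (convex_Ici Δ) (continuousOn hΔ) fun x hx ↦ by
    rw [interior_Ici] at hx
    linarith [deriv_le hΔ.le hx]

theorem le_neg_mul (hΔ : 0 ≤ Δ) (hx : Δ < x) : weightedLogRatio Δ x ≤ -(Δ * (x - Δ)) := by
  have hx0 : 0 < x := hΔ.trans_lt hx
  have hlog : log ((x - Δ) / x) ≤ -Δ / x := by
    have := log_le_sub_one_of_pos (div_pos (sub_pos.2 hx) hx0)
    rwa [div_sub_one hx0.ne', sub_sub_cancel_left] at this
  calc weightedLogRatio Δ x ≤ x * (x - Δ) * (-Δ / x) :=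
        mul_le_mul_of_nonneg_left hlog (mul_nonneg hx0.le (sub_pos.2 hx).le)
    _ = -(Δ * (x - Δ)) := by field_simp

theorem log_sub_div_self_add_div_eq (c : ℝ) (hx : x ≠ 0) (hxΔ : x - Δ ≠ 0) :
    log ((x - Δ) / x) + c * Δ / (3 * x * (x - Δ)) =
      (weightedLogRatio Δ x + c * Δ / 3) / (x * (x - Δ)) := by
  rw [weightedLogRatio]
  field_simp

end weightedLogRatio

open weightedLogRatio in
/-- The per-sample log-likelihood-ratio `g(x) = log((x−Δ)/x) + cΔ/(3x(x−Δ))` of the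
`M`-particle ML detector has a unique zero `x* > Δ`; moreover `g > 0` on `(Δ, x*)`
and `g < 0` on `(x*, ∞)`. -/
theorem unique_sign_change (c Δ : ℝ) (hc : 0 < c) (hΔ : 0 < Δ) :
    ∃ xs : ℝ, Δ < xs ∧
      Real.log ((xs - Δ) / xs) + c * Δ / (3 * xs * (xs - Δ)) = 0 ∧
      (∀ y : ℝ, Δ < y → Real.log ((y - Δ) / y) + c * Δ / (3 * y * (y - Δ)) = 0 → y = xs) ∧
      (∀ x : ℝ, Δ < x → x < xs → 0 < Real.log ((x - Δ) / x) + c * Δ / (3 * x * (x - Δ))) ∧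
      (∀ x : ℝ, xs < x → Real.log ((x - Δ) / x) + c * Δ / (3 * x * (x - Δ)) < 0) := by
  have hanti := strictAntiOn hΔ
  have hlevel : -(c * Δ / 3) ∈ Icc (weightedLogRatio Δ (Δ + c)) (weightedLogRatio Δ Δ) := by
    have := le_neg_mul hΔ.le (lt_add_of_pos_right Δ hc)
    rw [self_eq_zero]
    constructor <;> nlinarith [mul_pos hc hΔ]
  obtain ⟨xs, ⟨hΔxs, -⟩, hxs⟩ := intermediate_value_Icc' (by linarith)
    ((continuousOn hΔ).mono Icc_subset_Ici_self) hlevel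
  have hΔxs : Δ < xs := hΔxs.lt_of_ne <| by
    rintro rfl
    rw [self_eq_zero] at hxs
    linarith [mul_pos hc hΔ]
  have hden : ∀ x, Δ < x → 0 < x * (x - Δ) := fun x hx ↦
    mul_pos (hΔ.trans hx) (sub_pos.2 hx)
  have hg : ∀ x, Δ < x → log ((x - Δ) / x) + c * Δ / (3 * x * (x - Δ)) =
      (weightedLogRatio Δ x - weightedLogRatio Δ xs) / (x * (x - Δ)) := fun x hx ↦ by
    rw [log_sub_div_self_add_div_eq c (hΔ.trans hx).ne' (sub_pos.2 hx).ne', hxs, sub_neg_eq_add]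
  refine ⟨xs, hΔxs, by rw [hg xs hΔxs, sub_self, zero_div], fun y hy hy0 ↦ ?_,
    fun x hx hxxs ↦ ?_, fun x hxsx ↦ ?_⟩
  · rw [hg y hy, div_eq_zero_iff, sub_eq_zero] at hy0
    exact hanti.injOn hy.le hΔxs.le (hy0.resolve_right (hden y hy).ne')
  · rw [hg x hx]
    exact div_pos (sub_pos.2 (hanti hx.le hΔxs.le hxxs)) (hden x hx)
  · have hx := hΔxs.trans hxsx
    rw [hg x hx]
    exact div_neg_of_neg_of_pos (sub_neg.2 (hanti hΔxs.le hx.le hxsx)) (hden x hx)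
end

section
/- Let c > 0 and Δ > 0 and define g(x) = log((x − Δ)/x) + cΔ/(3·x·(x − Δ)) for x > Δ. Let x₁ = c/3 + (Δ/2)·(1 + √(1 + 4c²/(9Δ²))). Then x₁ > Δ, g is strictly decreasing on (Δ, x₁] and strictly increasing on [x₁, ∞); moreover g(x) tends to +∞ as x tends to Δ from the right, and g(x) tends to 0 as x tends to +∞. -/
open Filter

/-!
With `α = cΔ/3`, the derivative of `g` is `q(x) / (x² (x - Δ)²)` for the quadratic
`q(x) = Δ x² - (Δ² + 2α) x + αΔ`, whose roots are `x₁` and `α / x₁`. From `q(x₁) = 0` and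
`x₁ > Δ` one gets `α / x₁ < Δ`, so on `(Δ, ∞)` the sign of `g'` is the sign of `x - x₁`.
Near the pole, in the variable `y = x (x - Δ) → 0⁺`, `g = log y + α / y - 2 log x`, and
`log y + α / y = (y log y + α) / y → +∞` because `y log y → 0`. At infinity both terms of `g`
tend to `0`.
-/

open Real Set Topology

/-- The function `g` of the statement, with `α = cΔ/3`. -/
noncomputable def llr (Δ α x : ℝ) : ℝ := log ((x - Δ) / x) + α / (x * (x - Δ))

def llrNumerator (Δ α x : ℝ) : ℝ := Δ * x ^ 2 - (Δ ^ 2 + 2 * α) * x + α * Δ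

section

variable {Δ α x₁ : ℝ}

theorem hasDerivAt_llr {x : ℝ} (hx : x ≠ 0) (hxΔ : x ≠ Δ) :
    HasDerivAt (llr Δ α) (llrNumerator Δ α x / (x ^ 2 * (x - Δ) ^ 2)) x := by
  have hxΔ' : x - Δ ≠ 0 := sub_ne_zero.2 hxΔ
  have hratio : HasDerivAt (fun y => (y - Δ) / y) ((1 * x - (x - Δ) * 1) / x ^ 2) x :=
    ((hasDerivAt_id' x).sub_const Δ).div (hasDerivAt_id' x) hx
  have hprod : HasDerivAt (fun y => y * (y - Δ)) (1 * (x - Δ) + x * 1) x :=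
    (hasDerivAt_id' x).mul ((hasDerivAt_id' x).sub_const Δ)
  refine ((hratio.log (div_ne_zero hxΔ' hx)).add
    ((hasDerivAt_const x α).div hprod (mul_ne_zero hx hxΔ'))).congr_deriv ?_
  unfold llrNumerator
  field_simp
  ring

theorem llrNumerator_eq_mul (hx₁ : x₁ ≠ 0) (hq : llrNumerator Δ α x₁ = 0) (x : ℝ) :
    llrNumerator Δ α x = Δ * (x - x₁) * (x - α / x₁) := by
  unfold llrNumerator at *
  field_simp
  linear_combination x * hq

theorem div_lt_of_llrNumerator_eq_zero (hΔ : 0 < Δ) (hx₁ : Δ < x₁)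
    (hq : llrNumerator Δ α x₁ = 0) : α / x₁ < Δ := by
  unfold llrNumerator at hq
  rw [div_lt_iff₀ (by linarith)]
  by_contra! h
  nlinarith [mul_le_mul_of_nonneg_right h (by linarith : 0 ≤ 2 * x₁ - Δ),
    mul_pos hΔ (by linarith : 0 < x₁)]

theorem llr_strictAntiOn (hΔ : 0 < Δ) (hx₁ : Δ < x₁) (hq : llrNumerator Δ α x₁ = 0) :
    StrictAntiOn (llr Δ α) (Ioc Δ x₁) := by
  have hroot := div_lt_of_llrNumerator_eq_zero hΔ hx₁ hq
  refine strictAntiOn_of_deriv_neg (convex_Ioc Δ x₁)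
    (fun x hx => (hasDerivAt_llr (by linarith [hx.1]) hx.1.ne').continuousAt.continuousWithinAt) ?_
  rw [interior_Ioc]
  rintro x ⟨hΔx, hxx₁⟩
  rw [(hasDerivAt_llr (by linarith) hΔx.ne').deriv, llrNumerator_eq_mul (by linarith) hq]
  exact div_neg_of_neg_of_pos
    (mul_neg_of_neg_of_pos (mul_neg_of_pos_of_neg hΔ (by linarith)) (by linarith))
    (mul_pos (pow_pos (by linarith) 2) (pow_pos (sub_pos.2 hΔx) 2))

theorem llr_strictMonoOn (hΔ : 0 < Δ) (hx₁ : Δ < x₁) (hq : llrNumerator Δ α x₁ = 0) :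
    StrictMonoOn (llr Δ α) (Ici x₁) := by
  have hroot := div_lt_of_llrNumerator_eq_zero hΔ hx₁ hq
  refine strictMonoOn_of_deriv_pos (convex_Ici x₁)
    (fun x (hx : x₁ ≤ x) => (hasDerivAt_llr (by linarith)
      (by linarith)).continuousAt.continuousWithinAt) ?_
  rw [interior_Ici]
  intro x (hx : x₁ < x)
  rw [(hasDerivAt_llr (by linarith) (by linarith)).deriv, llrNumerator_eq_mul (by linarith) hq]
  exact div_pos (mul_pos (mul_pos hΔ (by linarith)) (by linarith))
    (mul_pos (pow_pos (by linarith) 2) (pow_pos (by linarith) 2))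

end

theorem llrNumerator_criticalPoint_eq_zero {c Δ : ℝ} (hΔ : Δ ≠ 0) :
    llrNumerator Δ (c * Δ / 3)
      (c / 3 + (Δ / 2) * (1 + √(1 + 4 * c ^ 2 / (9 * Δ ^ 2)))) = 0 := by
  set t := √(1 + 4 * c ^ 2 / (9 * Δ ^ 2)) with ht_def
  have ht : Δ ^ 2 * t ^ 2 = Δ ^ 2 + 4 * c ^ 2 / 9 := by
    rw [ht_def, sq_sqrt (by positivity)]
    field_simp
  unfold llrNumerator
  linear_combination (Δ / 4) * ht

theorem lt_criticalPoint {c Δ : ℝ} (hc : 0 < c) (hΔ : 0 ≤ Δ) :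
    Δ < c / 3 + (Δ / 2) * (1 + √(1 + 4 * c ^ 2 / (9 * Δ ^ 2))) := by
  have : 1 ≤ √(1 + 4 * c ^ 2 / (9 * Δ ^ 2)) :=
    one_le_sqrt.2 (le_add_of_nonneg_right (by positivity))
  nlinarith

theorem tendsto_log_add_div_nhdsGT_zero {a : ℝ} (ha : 0 < a) :
    Tendsto (fun y => log y + a / y) (𝓝[>] 0) atTop := by
  have hnum : Tendsto (fun y => y * log y + a) (𝓝[>] 0) (𝓝 a) := by
    simpa using ((continuous_mul_log.tendsto 0).mono_left nhdsWithin_le_nhds).add_const a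
  refine (hnum.pos_mul_atTop ha tendsto_inv_nhdsGT_zero).congr' ?_
  filter_upwards [self_mem_nhdsWithin] with y (hy : 0 < y)
  field_simp

theorem tendsto_mul_sub_nhdsGT {Δ : ℝ} (hΔ : 0 ≤ Δ) :
    Tendsto (fun x => x * (x - Δ)) (𝓝[>] Δ) (𝓝[>] 0) := by
  refine tendsto_nhdsWithin_of_tendsto_nhds_of_eventually_within _ ?_ ?_
  · have : Continuous fun x : ℝ => x * (x - Δ) := by fun_prop
    simpa using (this.tendsto Δ).mono_left nhdsWithin_le_nhds
  · filter_upwards [self_mem_nhdsWithin] with x (hx : Δ < x)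
    exact mul_pos (by linarith) (sub_pos.2 hx)

theorem llr_eq_log_add_div_sub_two_mul_log {Δ α x : ℝ} (hΔ : 0 ≤ Δ) (hx : Δ < x) :
    llr Δ α x = (log (x * (x - Δ)) + α / (x * (x - Δ))) - 2 * log x := by
  have hx0 : x ≠ 0 := by linarith
  have hxΔ : x - Δ ≠ 0 := by linarith
  rw [llr, log_div hxΔ hx0, log_mul hx0 hxΔ]
  ring

theorem tendsto_llr_nhdsGT {Δ α : ℝ} (hΔ : 0 < Δ) (hα : 0 < α) :
    Tendsto (llr Δ α) (𝓝[>] Δ) atTop := by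
  have hlog : Tendsto (fun x => 2 * log x) (𝓝[>] Δ) (𝓝 (2 * log Δ)) :=
    (((continuousAt_log hΔ.ne').tendsto).mono_left nhdsWithin_le_nhds).const_mul 2
  refine (((tendsto_log_add_div_nhdsGT_zero hα).comp (tendsto_mul_sub_nhdsGT hΔ.le)).atTop_add
    hlog.neg).congr' ?_
  filter_upwards [self_mem_nhdsWithin] with x (hx : Δ < x)
  rw [llr_eq_log_add_div_sub_two_mul_log hΔ.le hx]
  rfl

theorem tendsto_llr_atTop (Δ α : ℝ) : Tendsto (llr Δ α) atTop (𝓝 0) := by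
  have hratio : Tendsto (fun x => (x - Δ) / x) atTop (𝓝 1) := by
    have := tendsto_const_nhds (x := (1 : ℝ)).sub
      (tendsto_const_nhds (x := Δ).div_atTop tendsto_id)
    rw [sub_zero] at this
    refine this.congr' ?_
    filter_upwards [eventually_gt_atTop 0] with x (hx : 0 < x)
    simp only [id]
    field_simp
  have hden : Tendsto (fun x => x * (x - Δ)) atTop atTop :=
    tendsto_id.atTop_mul_atTop₀ (tendsto_atTop_add_const_right _ (-Δ) tendsto_id)
  have := ((continuousAt_log one_ne_zero).tendsto.comp hratio).add
    (tendsto_const_nhds (x := α).div_atTop hden)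
  rwa [log_one, zero_add] at this

/-- Shape of the per-sample log-likelihood-ratio `g` of the `M`-particle ML detector:
with `x₁ = c/3 + (Δ/2)(1 + √(1 + 4c²/(9Δ²)))` one has `x₁ > Δ`, `g` is strictly
decreasing on `(Δ, x₁]` and strictly increasing on `[x₁, ∞)`, `g → +∞` as `x → Δ⁺`,
and `g → 0` as `x → +∞`. -/
theorem g_shape (c Δ : ℝ) (hc : 0 < c) (hΔ : 0 < Δ) :
    Δ < c / 3 + (Δ / 2) * (1 + Real.sqrt (1 + 4 * c ^ 2 / (9 * Δ ^ 2))) ∧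
    StrictAntiOn (fun x : ℝ => Real.log ((x - Δ) / x) + c * Δ / (3 * x * (x - Δ)))
      (Set.Ioc Δ (c / 3 + (Δ / 2) * (1 + Real.sqrt (1 + 4 * c ^ 2 / (9 * Δ ^ 2))))) ∧
    StrictMonoOn (fun x : ℝ => Real.log ((x - Δ) / x) + c * Δ / (3 * x * (x - Δ)))
      (Set.Ici (c / 3 + (Δ / 2) * (1 + Real.sqrt (1 + 4 * c ^ 2 / (9 * Δ ^ 2))))) ∧
    Tendsto (fun x : ℝ => Real.log ((x - Δ) / x) + c * Δ / (3 * x * (x - Δ)))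
      (nhdsWithin Δ (Set.Ioi Δ)) atTop ∧
    Tendsto (fun x : ℝ => Real.log ((x - Δ) / x) + c * Δ / (3 * x * (x - Δ)))
      atTop (nhds 0) := by
  have hg : (fun x : ℝ => Real.log ((x - Δ) / x) + c * Δ / (3 * x * (x - Δ))) =
      llr Δ (c * Δ / 3) := by
    ext x
    rw [llr, mul_assoc, div_mul_eq_div_div]
  have hx₁ := lt_criticalPoint hc hΔ.le
  have hq := llrNumerator_criticalPoint_eq_zero (c := c) hΔ.ne'
  rw [hg]
  exact ⟨hx₁, llr_strictAntiOn hΔ hx₁ hq, llr_strictMonoOn hΔ hx₁ hq,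
    tendsto_llr_nhdsGT hΔ (by positivity), tendsto_llr_atTop Δ _⟩
end
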